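/- arXiv:1807.08540 — 3 statements merged into one kernel-verified Lean document; each statement's English description precedes it below -/
import Mathlib

section
/- Let π : X → Y be a pseudo-quotient for the action of G on X. If A ⊆ X is completely orbitwise-closed, then A is saturated for π, i.e. π⁻¹(π(A)) = A. -/
open Pointwise

/-- A pseudo-quotient for the action of a group `G` on a topological space `X`:
a continuous surjective map `π : X → Y` that is constant on `G`-orbits and such that
for any two disjoint closed `G`-invariant subsets `W₁, W₂ ⊆ X`, the closures of
`π(W₁)` and `π(W₂)` are disjoint. -/
structure IsPseudoQuotient (G : Type*) {X Y : Type*} [Group G] [MulAction G X]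
    [TopologicalSpace X] [TopologicalSpace Y] (π : X → Y) : Prop where
  continuous : Continuous π
  surjective : Function.Surjective π
  invariant : ∀ (g : G) (x : X), π (g • x) = π x
  separates : ∀ W₁ W₂ : Set X, IsClosed W₁ → IsClosed W₂ →
    (∀ g : G, g • W₁ = W₁) → (∀ g : G, g • W₂ = W₂) → Disjoint W₁ W₂ →
    Disjoint (closure (π '' W₁)) (closure (π '' W₂))


/-- A subset `A ⊆ X` is orbitwise-closed if for every `a ∈ A` the closure of the orbit
`G·a` is contained in `A`. -/
def OrbitwiseClosed (G : Type*) {X : Type*} [Group G] [MulAction G X] [TopologicalSpace X]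
    (A : Set X) : Prop :=
  ∀ a ∈ A, closure (MulAction.orbit G a) ⊆ A

/-!
Proof idea: if `a ∈ A` and `x ∉ A`, the orbit closures of `a` and `x` are closed, `G`-invariant
and disjoint (the first lies in `A`, the second in `Aᶜ`). The pseudo-quotient separates their
images, which contain `π a` and `π x` respectively, so `π a ≠ π x`.
-/

section

variable {G X : Type*} [Group G] [MulAction G X] [TopologicalSpace X]

theorem smul_closure_orbit [ContinuousConstSMul G X] (g : G) (x : X) :
    g • closure (MulAction.orbit G x) = closure (MulAction.orbit G x) := by
  rw [← closure_smul, MulAction.smul_orbit]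

theorem OrbitwiseClosed.disjoint_closure_orbit {A : Set X} (hA : OrbitwiseClosed G A)
    (hAc : OrbitwiseClosed G Aᶜ) {a x : X} (ha : a ∈ A) (hx : x ∉ A) :
    Disjoint (closure (MulAction.orbit G a)) (closure (MulAction.orbit G x)) :=
  Set.disjoint_left.mpr fun _ hza hzx => hAc x hx hzx (hA a ha hza)

theorem IsPseudoQuotient.apply_ne_of_disjoint_closure_orbit [ContinuousConstSMul G X]
    {Y : Type*} [TopologicalSpace Y] {π : X → Y} (hπ : IsPseudoQuotient G π) {a x : X}
    (hax : Disjoint (closure (MulAction.orbit G a)) (closure (MulAction.orbit G x))) :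
    π a ≠ π x := by
  have hsep := hπ.separates _ _ isClosed_closure isClosed_closure
    (smul_closure_orbit · a) (smul_closure_orbit · x) hax
  have mem_closure_image (y : X) : π y ∈ closure (π '' closure (MulAction.orbit G y)) :=
    subset_closure ⟨y, subset_closure (MulAction.mem_orbit_self y), rfl⟩
  intro h
  exact Set.disjoint_left.mp hsep (mem_closure_image a) (h ▸ mem_closure_image x)

end

theorem pseudoQuotient_saturated_of_completelyOrbitwiseClosed_general {G X Y : Type*} [Group G]
    [MulAction G X] [TopologicalSpace X] [TopologicalSpace Y]
    [ContinuousConstSMul G X]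
    (π : X → Y) (hπ : IsPseudoQuotient G π)
    (A : Set X) (hA : OrbitwiseClosed G A) (hAc : OrbitwiseClosed G Aᶜ) :
    π ⁻¹' (π '' A) = A := by
  refine (Set.subset_preimage_image π A).antisymm' ?_
  rintro x ⟨a, ha, hax⟩
  by_contra hx
  exact hπ.apply_ne_of_disjoint_closure_orbit (hA.disjoint_closure_orbit hAc ha hx) hax

/-- If `A` is completely orbitwise-closed (both `A` and its complement are
orbitwise-closed), then `A` is saturated for any pseudo-quotient `π`,
i.e. `π⁻¹(π(A)) = A`. -/
theorem pseudoQuotient_saturated_of_completelyOrbitwiseClosed {G X Y : Type*} [Group G]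
    [MulAction G X] [TopologicalSpace X] [TopologicalSpace Y] [T1Space Y]
    [ContinuousConstSMul G X]
    (π : X → Y) (hπ : IsPseudoQuotient G π)
    (A : Set X) (hA : OrbitwiseClosed G A) (hAc : OrbitwiseClosed G Aᶜ) :
    π ⁻¹' (π '' A) = A :=
  pseudoQuotient_saturated_of_completelyOrbitwiseClosed_general π hπ A hA hAc
end

section
/- Let π : X → Y and π' : X → Y' be pseudo-quotients for the action of G on X, and suppose α : Y → Y' is a function satisfying π' = α ∘ π. Then α is bijective. -/
/-!
Surjectivity of `α` is inherited from `π' = α ∘ π`. For injectivity, distinct points `y₁ ≠ y₂`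
of the T1 space `Y` have closed, `G`-invariant, disjoint fibres under `π`; these map onto
`{α y₁}` and `{α y₂}` under `π'`, which therefore are disjoint.
-/

open Pointwise

namespace IsPseudoQuotient

variable {G X Y Y' : Type*} [Group G] [MulAction G X] [TopologicalSpace X] [TopologicalSpace Y]
  {π : X → Y} {π' : X → Y'}

theorem smul_preimage (hπ : IsPseudoQuotient G π) (g : G) (s : Set Y) :
    g • (π ⁻¹' s) = π ⁻¹' s := by
  ext x
  simp only [Set.mem_smul_set_iff_inv_smul_mem, Set.mem_preimage, hπ.invariant]

theorem image_fiber_of_comp_eq (hπ : IsPseudoQuotient G π) {α : Y → Y'} (hα : π' = α ∘ π)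
    (y : Y) : π' '' (π ⁻¹' {y}) = {α y} := by
  rw [hα, Set.image_comp, Set.image_preimage_eq _ hπ.surjective, Set.image_singleton]

variable [TopologicalSpace Y']

theorem disjoint_closure_image_fiber [T1Space Y] (hπ : IsPseudoQuotient G π)
    (hπ' : IsPseudoQuotient G π') {y₁ y₂ : Y} (hne : y₁ ≠ y₂) :
    Disjoint (closure (π' '' (π ⁻¹' {y₁}))) (closure (π' '' (π ⁻¹' {y₂}))) :=
  hπ'.separates _ _ (isClosed_singleton.preimage hπ.continuous)
    (isClosed_singleton.preimage hπ.continuous) (hπ.smul_preimage · _) (hπ.smul_preimage · _)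
    ((Set.disjoint_singleton.mpr hne).preimage π)

theorem injective_of_comp_eq [T1Space Y] (hπ : IsPseudoQuotient G π)
    (hπ' : IsPseudoQuotient G π') {α : Y → Y'} (hα : π' = α ∘ π) : Function.Injective α := by
  intro y₁ y₂ hαy
  by_contra hne
  have hdisj := hπ.disjoint_closure_image_fiber hπ' hne
  rw [hπ.image_fiber_of_comp_eq hα, hπ.image_fiber_of_comp_eq hα, hαy] at hdisj
  exact hdisj.ne_of_mem (subset_closure rfl) (subset_closure rfl) rfl

end IsPseudoQuotient

theorem pseudoQuotient_comparison_bijective_general {G X Y Y' : Type*} [Group G] [MulAction G X]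
    [TopologicalSpace X] [TopologicalSpace Y] [T1Space Y] [TopologicalSpace Y']
    (π : X → Y) (π' : X → Y') (hπ : IsPseudoQuotient G π) (hπ' : IsPseudoQuotient G π')
    (α : Y → Y') (hα : π' = α ∘ π) :
    Function.Bijective α :=
  ⟨hπ.injective_of_comp_eq hπ' hα, .of_comp (hα ▸ hπ'.surjective)⟩

/-- If `π : X → Y` and `π' : X → Y'` are pseudo-quotients for the same action and
`α : Y → Y'` satisfies `π' = α ∘ π`, then `α` is bijective. -/
theorem pseudoQuotient_comparison_bijective {G X Y Y' : Type*} [Group G] [MulAction G X]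
    [TopologicalSpace X] [TopologicalSpace Y] [T1Space Y] [TopologicalSpace Y'] [T1Space Y']
    [ContinuousConstSMul G X]
    (π : X → Y) (π' : X → Y') (hπ : IsPseudoQuotient G π) (hπ' : IsPseudoQuotient G π')
    (α : Y → Y') (hα : π' = α ∘ π) :
    Function.Bijective α :=
  pseudoQuotient_comparison_bijective_general π π' hπ hπ' α hα
end

section
/- Let π : X → X̄ be a pseudo-quotient for the action of G on X, and suppose X = Y ⊔ U is a partition where Y is closed and G-invariant and U is open and orbitwise-closed. Then X̄ is the disjoint union of π(Y) and π(U), the set π(U) is open in X̄, the set π(Y) is closed in X̄, and the restrictions π|_U : U → π(U) and π|_Y : Y → π(Y) (with subspace topologies and restricted G-actions) are pseudo-quotients. -/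
open Pointwise

/-!
Two facts about a pseudo-quotient `π` drive everything. Since `Xb` is T1, `π` is constant on
orbit closures. Separating `closure (G • x)` from the closure of an invariant set `W` shows that
`π x ∈ closure (π '' W)` forces `closure (G • x)` to meet `closure W`.

For `x ∈ U` the orbit closure stays inside `U`, hence misses the closed set `Y`; so `π '' U`
avoids `closure (π '' Y)`, which gives the partition and the closedness of `π '' Y`. Restricting
to the closed set `Y` is immediate, as relatively closed subsets of `Y` are closed in `X`.
Restricting to `U` uses the second fact twice, once for each of the two separated sets.
-/

open Set MulAction

def SubMulAction.imageFactorization {G X Xb : Type*} [Group G] [MulAction G X]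
    (S : SubMulAction G X) (π : X → Xb) : S → π '' (S : Set X) :=
  fun s => ⟨π s, mem_image_of_mem π s.2⟩

lemma SubMulAction.smul_image_val_eq {G X : Type*} [Group G] [MulAction G X]
    (S : SubMulAction G X) {W : Set S} (hW : ∀ g : G, g • W = W) (g : G) :
    g • (Subtype.val '' W) = Subtype.val '' W :=
  calc g • (Subtype.val '' W) = Subtype.val '' (g • W) := (image_smul_setₛₗ S.subtype g W).symm
    _ = Subtype.val '' W := by rw [hW]

lemma closure_image_val_inter_subset {X : Type*} [TopologicalSpace X] {S : Set X}
    {W : Set S} (hW : IsClosed W) : closure (Subtype.val '' W) ∩ S ⊆ Subtype.val '' W := by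
  rintro x ⟨hx, hxS⟩
  refine ⟨⟨x, hxS⟩, ?_, rfl⟩
  rw [← hW.closure_eq, closure_subtype]
  exact hx

namespace IsPseudoQuotient

variable {G X Xb : Type*} [Group G] [MulAction G X] [TopologicalSpace X] [TopologicalSpace Xb]
  {π : X → Xb}

theorem eq_of_mem_closure_orbit [T1Space Xb] (hπ : IsPseudoQuotient G π) {x y : X}
    (hy : y ∈ closure (orbit G x)) : π y = π x := by
  have hmaps : MapsTo π (orbit G x) {π x} := by
    rintro _ ⟨g, rfl⟩
    exact hπ.invariant g x
  simpa using hmaps.closure hπ.continuous hy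

theorem closure_orbit_inter_closure_nonempty [ContinuousConstSMul G X]
    (hπ : IsPseudoQuotient G π) {W : Set X} (hW : ∀ g : G, g • W = W) {x : X}
    (hx : π x ∈ closure (π '' W)) : (closure (orbit G x) ∩ closure W).Nonempty := by
  rw [← not_disjoint_iff_nonempty_inter]
  intro hd
  have hsep := hπ.separates _ _ isClosed_closure isClosed_closure
    (fun g => by rw [← closure_smul, smul_orbit]) (fun g => by rw [← closure_smul, hW]) hd
  exact disjoint_left.1 hsep
    (subset_closure (mem_image_of_mem π (subset_closure (mem_orbit_self x))))
    (closure_mono (image_mono subset_closure) hx)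

theorem notMem_closure_image [ContinuousConstSMul G X] (hπ : IsPseudoQuotient G π)
    {W : Set X} (hWc : IsClosed W) (hW : ∀ g : G, g • W = W) {x : X}
    (hx : Disjoint (closure (orbit G x)) W) : π x ∉ closure (π '' W) := fun h => by
  have hmeet := hπ.closure_orbit_inter_closure_nonempty hW h
  rw [hWc.closure_eq] at hmeet
  exact not_disjoint_iff_nonempty_inter.2 hmeet hx

theorem exists_mem_closure_orbit [ContinuousConstSMul G X] (hπ : IsPseudoQuotient G π)
    {S W : Set X} (hS : OrbitwiseClosed G S) (hWc : closure W ∩ S ⊆ W)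
    (hW : ∀ g : G, g • W = W) {x : X} (hx : x ∈ S) (h : π x ∈ closure (π '' W)) :
    ∃ y ∈ closure (orbit G x), y ∈ W := by
  obtain ⟨y, hyx, hyW⟩ := hπ.closure_orbit_inter_closure_nonempty hW h
  exact ⟨y, hyx, hWc ⟨hyW, hS x hx hyx⟩⟩

/-- From `x` the orbit closure reaches a point `y ∈ W₁` with `π y = π x`; the orbit closure of
`y` stays in `W₁` yet reaches `W₂`. -/
theorem notMem_closure_image_of_orbitwiseClosed [T1Space Xb] [ContinuousConstSMul G X]
    (hπ : IsPseudoQuotient G π) {S W₁ W₂ : Set X} (hS : OrbitwiseClosed G S) (hW₁S : W₁ ⊆ S)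
    (hW₁c : closure W₁ ∩ S ⊆ W₁) (hW₂c : closure W₂ ∩ S ⊆ W₂)
    (hW₁ : ∀ g : G, g • W₁ = W₁) (hW₂ : ∀ g : G, g • W₂ = W₂) (hd : Disjoint W₁ W₂)
    {x : X} (hx : x ∈ S) (h₁ : π x ∈ closure (π '' W₁)) : π x ∉ closure (π '' W₂) := by
  intro h₂
  obtain ⟨y, hyx, hy₁⟩ := hπ.exists_mem_closure_orbit hS hW₁c hW₁ hx h₁
  rw [← hπ.eq_of_mem_closure_orbit hyx] at h₂
  obtain ⟨z, hzy, hz₂⟩ := hπ.exists_mem_closure_orbit hS hW₂c hW₂ (hW₁S hy₁) h₂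
  have horbit : orbit G y ⊆ W₁ := by
    rintro _ ⟨g, rfl⟩
    exact hW₁ g ▸ smul_mem_smul_set hy₁
  exact disjoint_left.1 hd (hW₁c ⟨closure_mono horbit hzy, hS y (hW₁S hy₁) hzy⟩) hz₂

theorem disjoint_closure_image [ContinuousConstSMul G X] (hπ : IsPseudoQuotient G π)
    {Y U : Set X} (hYc : IsClosed Y) (hY : ∀ g : G, g • Y = Y) (hU : OrbitwiseClosed G U)
    (hYU : Disjoint Y U) : Disjoint (closure (π '' Y)) (π '' U) := by
  rw [disjoint_right]
  rintro _ ⟨x, hx, rfl⟩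
  exact hπ.notMem_closure_image hYc hY (hYU.mono_right (hU x hx)).symm

theorem isCompl_image [ContinuousConstSMul G X] (hπ : IsPseudoQuotient G π) {Y U : Set X}
    (hYc : IsClosed Y) (hY : ∀ g : G, g • Y = Y) (hU : OrbitwiseClosed G U)
    (hYU : IsCompl Y U) : IsCompl (π '' Y) (π '' U) where
  disjoint := (hπ.disjoint_closure_image hYc hY hU hYU.disjoint).mono_left subset_closure
  codisjoint := codisjoint_iff.2 <| by
    simpa only [sup_eq_union, top_eq_univ, image_union, image_univ,
      hπ.surjective.range_eq] using
      congrArg (π '' ·) (codisjoint_iff.1 hYU.codisjoint)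

theorem isClosed_image [ContinuousConstSMul G X] (hπ : IsPseudoQuotient G π) {Y U : Set X}
    (hYc : IsClosed Y) (hY : ∀ g : G, g • Y = Y) (hU : OrbitwiseClosed G U)
    (hYU : IsCompl Y U) : IsClosed (π '' Y) := by
  refine isClosed_of_closure_subset ?_
  calc closure (π '' Y) ⊆ (π '' U)ᶜ :=
        (hπ.disjoint_closure_image hYc hY hU hYU.disjoint).subset_compl_right
    _ = π '' Y := (hπ.isCompl_image hYc hY hU hYU).symm.compl_eq

theorem imageFactorization (hπ : IsPseudoQuotient G π) (S : SubMulAction G X)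
    (hsep : ∀ W₁ W₂ : Set S, IsClosed W₁ → IsClosed W₂ → (∀ g : G, g • W₁ = W₁) →
      (∀ g : G, g • W₂ = W₂) → Disjoint W₁ W₂ → ∀ s : S,
      π s ∈ closure (π '' (Subtype.val '' W₁)) → π s ∉ closure (π '' (Subtype.val '' W₂))) :
    IsPseudoQuotient G (S.imageFactorization π) where
  continuous := (hπ.continuous.comp continuous_subtype_val).subtype_mk _
  surjective := by
    rintro ⟨_, s, hs, rfl⟩
    exact ⟨⟨s, hs⟩, rfl⟩
  invariant g s := Subtype.ext (hπ.invariant g s)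
  separates W₁ W₂ hW₁c hW₂c hW₁ hW₂ hd := by
    have himage (W : Set S) :
        Subtype.val '' (S.imageFactorization π '' W) = π '' (Subtype.val '' W) := by
      simp only [image_image]
      rfl
    rw [disjoint_left]
    rintro ⟨_, s, hs, rfl⟩ h₁ h₂
    rw [closure_subtype, himage] at h₁ h₂
    exact hsep W₁ W₂ hW₁c hW₂c hW₁ hW₂ hd ⟨s, hs⟩ h₁ h₂

theorem imageFactorization_of_isClosed (hπ : IsPseudoQuotient G π) (S : SubMulAction G X)
    (hS : IsClosed (S : Set X)) : IsPseudoQuotient G (S.imageFactorization π) := by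
  refine hπ.imageFactorization S fun W₁ W₂ hW₁c hW₂c hW₁ hW₂ hd s h₁ h₂ => ?_
  have hsep := hπ.separates _ _ (hS.isClosedEmbedding_subtypeVal.isClosedMap _ hW₁c)
    (hS.isClosedEmbedding_subtypeVal.isClosedMap _ hW₂c)
    (S.smul_image_val_eq hW₁) (S.smul_image_val_eq hW₂)
    (disjoint_image_of_injective Subtype.val_injective hd)
  exact disjoint_left.1 hsep h₁ h₂

theorem imageFactorization_of_orbitwiseClosed [T1Space Xb] [ContinuousConstSMul G X]
    (hπ : IsPseudoQuotient G π) (S : SubMulAction G X) (hS : OrbitwiseClosed G (S : Set X)) :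
    IsPseudoQuotient G (S.imageFactorization π) :=
  hπ.imageFactorization S fun _ _ hW₁c hW₂c hW₁ hW₂ hd s =>
    hπ.notMem_closure_image_of_orbitwiseClosed hS (image_subset_iff.2 fun t _ => t.2)
      (closure_image_val_inter_subset hW₁c) (closure_image_val_inter_subset hW₂c)
      (S.smul_image_val_eq hW₁) (S.smul_image_val_eq hW₂)
      (disjoint_image_of_injective Subtype.val_injective hd) s.2

end IsPseudoQuotient

/-- If `π : X → X̄` is a pseudo-quotient and `X = Y ⊔ U` with `Y` closed `G`-invariant and
`U` open orbitwise-closed, then `X̄` is the disjoint union of the closed set `π(Y)` and the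
open set `π(U)`, and both restrictions `π|_Y : Y → π(Y)` and `π|_U : U → π(U)` are
pseudo-quotients. -/
theorem pseudoQuotient_decomposition {G X Xb : Type*} [Group G] [MulAction G X]
    [TopologicalSpace X] [TopologicalSpace Xb] [T1Space Xb] [ContinuousConstSMul G X]
    (π : X → Xb) (hπ : IsPseudoQuotient G π)
    (Y U : Set X)
    (hYc : IsClosed Y) (hYinv : ∀ g : G, g • Y = Y)
    (hUoc : OrbitwiseClosed G U)
    (hcover : Y ∪ U = Set.univ) (hdisj : Disjoint Y U) :
    (π '' Y ∪ π '' U = Set.univ ∧ Disjoint (π '' Y) (π '' U)) ∧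
    IsOpen (π '' U) ∧ IsClosed (π '' Y) ∧
    IsPseudoQuotient G
      (fun u : (⟨U, fun g {x} hx =>
          hUoc x hx (subset_closure (MulAction.mem_orbit x g))⟩ : SubMulAction G X) =>
        (⟨π u, Set.mem_image_of_mem π u.2⟩ : π '' U)) ∧
    IsPseudoQuotient G
      (fun w : (⟨Y, fun g {x} hx => by
          rw [← hYinv g]; exact Set.smul_mem_smul_set hx⟩ : SubMulAction G X) =>
        (⟨π w, Set.mem_image_of_mem π w.2⟩ : π '' Y)) := by
  have hYU : IsCompl Y U := ⟨hdisj, codisjoint_iff.2 hcover⟩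
  have himage := hπ.isCompl_image hYc hYinv hUoc hYU
  have hclosed := hπ.isClosed_image hYc hYinv hUoc hYU
  exact ⟨⟨codisjoint_iff.1 himage.codisjoint, himage.disjoint⟩,
    himage.compl_eq ▸ hclosed.isOpen_compl, hclosed,
    hπ.imageFactorization_of_orbitwiseClosed _ hUoc, hπ.imageFactorization_of_isClosed _ hYc⟩
end
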